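/- arXiv:2406.17315 — 3 statements merged into one kernel-verified Lean document; each statement's English description precedes it below -/
import Mathlib

section
/- If α and β are ordinals with β + ω ≤ α, then 2^α ≥ 2^β · 2 + ω. -/
open Ordinal

theorem two_opow_ge_of_add_omega_le (α β : Ordinal) (h : β + ω ≤ α) :
    (2 : Ordinal) ^ α ≥ 2 ^ β * 2 + ω := by
  have h2 : (1:Ordinal) < 2 := one_lt_two
  calc (2:Ordinal) ^ β * 2 + ω
      ≤ 2 ^ β * 2 + 2 ^ β * ω := by
        gcongr
        exact Ordinal.le_mul_right ω (opow_pos β (by norm_num))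
    _ = 2 ^ β * (2 + ω) := (mul_add _ _ _).symm
    _ = 2 ^ β * ω := by rw [Ordinal.add_omega0 (show (2:Ordinal) < ω by exact_mod_cast nat_lt_omega0 2)]
    _ = 2 ^ β * 2 ^ ω := by rw [Ordinal.opow_omega0 h2 (show (2:Ordinal) < ω by exact_mod_cast nat_lt_omega0 2)]
    _ = 2 ^ (β + ω) := (opow_add 2 β ω).symm
    _ ≤ 2 ^ α := opow_le_opow_right (by norm_num) h
end

section
/- For all natural numbers h ≥ 0 and k ≥ 0, the ordinal 2_k(ω^(h+1)) · 2 + ω is strictly less than ω_{k+1}(ω), where 2_0(α) = α, 2_{j+1}(α) = 2^(2_j(α)), ω_0(α) = α, ω_{j+1}(α) = ω^(ω_j(α)), and all exponentiations are ordinal exponentiations. -/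
open Ordinal

/-- Iterated base-2 ordinal exponentiation tower: `2_0(α) = α`, `2_{j+1}(α) = 2 ^ (2_j(α))`. -/
noncomputable def twoTower : ℕ → Ordinal → Ordinal
  | 0, α => α
  | j + 1, α => (2 : Ordinal) ^ twoTower j α

/-- Iterated base-ω ordinal exponentiation tower: `ω_0(α) = α`, `ω_{j+1}(α) = ω ^ (ω_j(α))`. -/
noncomputable def omegaTower : ℕ → Ordinal → Ordinal
  | 0, α => α
  | j + 1, α => (ω : Ordinal) ^ omegaTower j α

lemma twoTower_le_omegaTower (k : ℕ) (α : Ordinal) : twoTower k α ≤ omegaTower k α := by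
  induction k with
  | zero => simp [twoTower, omegaTower]
  | succ j ih =>
      calc twoTower (j+1) α = (2:Ordinal) ^ twoTower j α := rfl
        _ ≤ (2:Ordinal) ^ omegaTower j α :=
            opow_le_opow_right (by norm_num) ih
        _ ≤ (ω : Ordinal) ^ omegaTower j α :=
            opow_le_opow_left _ (by exact_mod_cast (nat_lt_omega0 2).le)
        _ = omegaTower (j+1) α := rfl

lemma omegaTower_strictMono (k : ℕ) : StrictMono (omegaTower k) := by
  induction k with
  | zero => exact fun a b h => h
  | succ j ih =>
      intro a b hab
      exact (opow_lt_opow_iff_right one_lt_omega0).2 (ih hab)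

lemma omegaTower_omega_opow (k : ℕ) (α : Ordinal) :
    omegaTower k ((ω : Ordinal) ^ α) = omegaTower (k + 1) α := by
  induction k with
  | zero => rfl
  | succ j ih => show (ω:Ordinal) ^ _ = (ω:Ordinal) ^ _; rw [ih]

lemma omega0_le_omegaTower (k : ℕ) : (ω : Ordinal) ≤ omegaTower k ω := by
  induction k with
  | zero => exact le_rfl
  | succ j ih =>
      calc (ω : Ordinal) = ω ^ (1:Ordinal) := (opow_one _).symm
        _ ≤ ω ^ omegaTower j ω :=
            opow_le_opow_right omega0_pos (one_lt_omega0.le.trans ih)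

theorem twoTower_mul_two_add_omega_lt_omegaTower (h k : ℕ) :
    twoTower k ((ω : Ordinal) ^ ((h : Ordinal) + 1)) * 2 + ω < omegaTower (k + 1) ω := by
  -- omegaTower (k+1) ω = ω ^ ω ^ δ for some δ
  obtain ⟨δ, hδ⟩ : ∃ δ : Ordinal, omegaTower (k + 1) ω = (ω : Ordinal) ^ (ω : Ordinal) ^ δ := by
    cases k with
    | zero => exact ⟨1, by simp [omegaTower, opow_one]⟩
    | succ j => exact ⟨omegaTower j ω, rfl⟩
  have hmul : Principal (· * ·) (omegaTower (k + 1) ω) := by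
    rw [hδ]; exact principal_mul_omega0_opow_opow δ
  have hadd : Principal (· + ·) (omegaTower (k + 1) ω) := by
    rw [hδ]; exact principal_add_omega0_opow _
  have hone : (1 : Ordinal) < omegaTower k ω :=
    one_lt_omega0.trans_le (omega0_le_omegaTower k)
  have homega_lt : (ω : Ordinal) < omegaTower (k + 1) ω := by
    calc (ω : Ordinal) = ω ^ (1:Ordinal) := (opow_one _).symm
      _ < ω ^ omegaTower k ω := (opow_lt_opow_iff_right one_lt_omega0).2 hone
  have ha : twoTower k ((ω : Ordinal) ^ ((h : Ordinal) + 1)) < omegaTower (k + 1) ω := by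
    calc twoTower k ((ω : Ordinal) ^ ((h : Ordinal) + 1))
        ≤ omegaTower k ((ω : Ordinal) ^ ((h : Ordinal) + 1)) := twoTower_le_omegaTower _ _
      _ = omegaTower (k + 1) ((h : Ordinal) + 1) := omegaTower_omega_opow _ _
      _ < omegaTower (k + 1) ω := omegaTower_strictMono _ (by
          exact_mod_cast nat_lt_omega0 (h + 1))
  have h2 : (2 : Ordinal) < omegaTower (k + 1) ω := (nat_lt_omega0 2).trans homega_lt
  exact hadd (hmul ha h2) homega_lt
end

section
/- Suppose α₀, …, α_l and β are ordinals with β + ω ≤ α_l. Then (2^{α₀} ⊕ ⋯ ⊕ 2^{α_l}) ⊕ 2^{α_l} ≥ ((2^{α₀} ⊕ ⋯ ⊕ 2^{α_l}) ⊕ 2^{β} ⊕ 2^{β}) + ω, where ⊕ is the natural sum, the exponentiations are ordinal base-2 exponentiations, and the final + is ordinal addition. -/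
/-!
Since `β + ω = ω * (β / ω + 1)`, the ordinal `2 ^ (β + ω)` is the power `ω ^ (β / ω + 1)`, and
powers of `ω` are closed under the natural sum, so `(2 ^ β ♯ 2 ^ β) + ω ≤ 2 ^ (β + ω) ≤ 2 ^ α_l`.
An ordinal `+ ω` after a natural sum can be absorbed into its last summand,
`(a ♯ b) + c ≤ a ♯ (b + c)`, which gives the claim.

Closure of `ω ^ γ` under `♯` is proved by induction on `γ`. At a successor `γ = δ + 1`, splitting
both arguments at `v = ω ^ δ` into quotient and remainder gives
`a ♯ b ≤ v * (a / v ♯ b / v) + (a % v ♯ b % v)`, where the quotients are finite and the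
remainders are below `ω ^ δ`.
-/

universe u

/-- Natural (Hessenberg) operations on ordinals: `NatOrdinal` is a copy of `Ordinal`
whose addition is the natural sum. (Removed from Mathlib; restored with its old meaning.) -/
def NatOrdinal : Type (u + 1) := Ordinal.{u}

namespace Ordinal

/-- The natural (Hessenberg) sum of two ordinals. -/
noncomputable def nadd (a b : Ordinal.{u}) : Ordinal.{u} :=
  max (⨆ x : Set.Iio a, Order.succ (nadd x.1 b)) (⨆ y : Set.Iio b, Order.succ (nadd a y.1))
termination_by (a, b)
decreasing_by
  · exact Prod.Lex.left _ _ x.2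
  · exact Prod.Lex.right _ y.2

theorem nadd_lt_nadd_right' {a' a : Ordinal.{u}} (b : Ordinal.{u}) (h : a' < a) :
    nadd a' b < nadd a b := by
  rw [nadd.eq_1 a b]
  refine lt_of_lt_of_le (Order.lt_succ _) (le_trans ?_ (le_max_left _ _))
  exact Ordinal.le_iSup (fun x : Set.Iio a => Order.succ (nadd x.1 b)) ⟨a', h⟩

theorem nadd_lt_nadd_left' (a : Ordinal.{u}) {b' b : Ordinal.{u}} (h : b' < b) :
    nadd a b' < nadd a b := by
  rw [nadd.eq_1 a b]
  refine lt_of_lt_of_le (Order.lt_succ _) (le_trans ?_ (le_max_right _ _))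
  exact Ordinal.le_iSup (fun y : Set.Iio b => Order.succ (nadd a y.1)) ⟨b', h⟩

theorem nadd_le_of' {a b c : Ordinal.{u}} (h₁ : ∀ a' < a, nadd a' b < c)
    (h₂ : ∀ b' < b, nadd a b' < c) : nadd a b ≤ c := by
  rw [nadd.eq_1 a b]
  refine max_le (Ordinal.iSup_le fun x => ?_) (Ordinal.iSup_le fun y => ?_)
  · exact Order.succ_le_of_lt (h₁ _ x.2)
  · exact Order.succ_le_of_lt (h₂ _ y.2)

theorem lt_nadd_iff' {a b c : Ordinal.{u}} (h : c < nadd a b) :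
    (∃ a' < a, c ≤ nadd a' b) ∨ (∃ b' < b, c ≤ nadd a b') := by
  by_contra hc
  push Not at hc
  exact absurd h (not_lt.2 (nadd_le_of' hc.1 hc.2))

theorem nadd_mono_left' (a : Ordinal.{u}) {b' b : Ordinal.{u}} (h : b' ≤ b) :
    nadd a b' ≤ nadd a b := by
  rcases h.lt_or_eq with h | h
  · exact (nadd_lt_nadd_left' a h).le
  · rw [h]

theorem nadd_mono_right' {a' a : Ordinal.{u}} (b : Ordinal.{u}) (h : a' ≤ a) :
    nadd a' b ≤ nadd a b := by
  rcases h.lt_or_eq with h | h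
  · exact (nadd_lt_nadd_right' b h).le
  · rw [h]

theorem nadd_comm' (a b : Ordinal.{u}) : nadd a b = nadd b a := by
  induction a using WellFoundedLT.induction generalizing b with
  | _ a iha =>
  induction b using WellFoundedLT.induction with
  | _ b ihb =>
  apply le_antisymm
  · refine nadd_le_of' (fun a' h => ?_) (fun b' h => ?_)
    · rw [iha a' h]; exact nadd_lt_nadd_left' b h
    · rw [ihb b' h]; exact nadd_lt_nadd_right' a h
  · refine nadd_le_of' (fun b' h => ?_) (fun a' h => ?_)
    · rw [← ihb b' h]; exact nadd_lt_nadd_left' a h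
    · rw [← iha a' h]; exact nadd_lt_nadd_right' b h

theorem nadd_zero' (a : Ordinal.{u}) : nadd a 0 = a := by
  induction a using WellFoundedLT.induction with
  | _ a iha =>
  apply le_antisymm
  · refine nadd_le_of' (fun a' h => ?_) (fun b' h => ?_)
    · rw [iha a' h]; exact h
    · simp at h
  · refine le_of_forall_lt fun c hc => ?_
    rw [← iha c hc]; exact nadd_lt_nadd_right' 0 hc

theorem nadd_assoc' (a b c : Ordinal.{u}) : nadd (nadd a b) c = nadd a (nadd b c) := by
  induction a using WellFoundedLT.induction generalizing b c with
  | _ a iha =>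
  induction b using WellFoundedLT.induction generalizing c with
  | _ b ihb =>
  induction c using WellFoundedLT.induction with
  | _ c ihc =>
  apply le_antisymm
  · refine nadd_le_of' (fun d h => ?_) (fun c' h => ?_)
    · rcases lt_nadd_iff' h with ⟨a', ha, hd⟩ | ⟨b', hb, hd⟩
      · refine lt_of_le_of_lt (nadd_mono_right' c hd) ?_
        rw [iha a' ha]; exact nadd_lt_nadd_right' _ ha
      · refine lt_of_le_of_lt (nadd_mono_right' c hd) ?_
        rw [ihb b' hb]; exact nadd_lt_nadd_left' a (nadd_lt_nadd_right' c hb)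
    · rw [ihc c' h]; exact nadd_lt_nadd_left' a (nadd_lt_nadd_left' b h)
  · refine nadd_le_of' (fun a' h => ?_) (fun d h => ?_)
    · rw [← iha a' h]; exact nadd_lt_nadd_right' c (nadd_lt_nadd_right' b h)
    · rcases lt_nadd_iff' h with ⟨b', hb, hd⟩ | ⟨c', hc, hd⟩
      · refine lt_of_le_of_lt (nadd_mono_left' a hd) ?_
        rw [← ihb b' hb]; exact nadd_lt_nadd_right' c (nadd_lt_nadd_left' a hb)
      · refine lt_of_le_of_lt (nadd_mono_left' a hd) ?_
        rw [← ihc c' hc]; exact nadd_lt_nadd_left' _ hc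

end Ordinal

namespace NaturalOps

scoped infixl:65 " ♯ " => Ordinal.nadd

end NaturalOps

noncomputable instance NatOrdinal.linearOrder : LinearOrder NatOrdinal.{u} :=
  inferInstanceAs (LinearOrder Ordinal.{u})

noncomputable instance NatOrdinal.zero : Zero NatOrdinal.{u} := ⟨(0 : Ordinal.{u})⟩

noncomputable instance NatOrdinal.add : Add NatOrdinal.{u} := ⟨Ordinal.nadd⟩

noncomputable instance NatOrdinal.addCommMonoid : AddCommMonoid NatOrdinal.{u} where
  add_assoc := Ordinal.nadd_assoc'
  zero_add a := (Ordinal.nadd_comm' _ _).trans (Ordinal.nadd_zero' a)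
  add_zero := Ordinal.nadd_zero'
  add_comm := Ordinal.nadd_comm'
  nsmul := nsmulRec
  nsmul_zero _ := rfl
  nsmul_succ _ _ := rfl

/-- The identity order isomorphism from `Ordinal` to `NatOrdinal`. -/
noncomputable def Ordinal.toNatOrdinal : Ordinal.{u} ≃o NatOrdinal.{u} := OrderIso.refl _

/-- The identity order isomorphism from `NatOrdinal` to `Ordinal`. -/
noncomputable def NatOrdinal.toOrdinal : NatOrdinal.{u} ≃o Ordinal.{u} := OrderIso.refl _

open Ordinal
open scoped NaturalOps

/-- The natural (Hessenberg) sum of a finite family of ordinals. -/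
noncomputable def natSum {ι : Type*} (s : Finset ι) (f : ι → Ordinal) : Ordinal :=
  NatOrdinal.toOrdinal (∑ i ∈ s, Ordinal.toNatOrdinal (f i))

namespace Ordinal

theorem nadd_succ (a b : Ordinal) : a ♯ Order.succ b = Order.succ (a ♯ b) := by
  induction a using WellFoundedLT.induction with
  | _ a iha =>
  apply le_antisymm
  · refine nadd_le_of' (fun a' h => ?_) (fun b' h => ?_)
    · rw [iha a' h]
      exact Order.succ_lt_succ (nadd_lt_nadd_right' b h)
    · exact Order.lt_succ_of_le (nadd_mono_left' a (Order.lt_succ_iff.1 h))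
  · exact Order.succ_le_of_lt (nadd_lt_nadd_left' a (Order.lt_succ b))

theorem nadd_natCast (a : Ordinal) (n : ℕ) : a ♯ n = a + n := by
  induction n with
  | zero => simpa using nadd_zero' a
  | succ n ih =>
    rw [Nat.cast_succ, ← add_assoc, ← Order.succ_eq_add_one, ← Order.succ_eq_add_one, nadd_succ, ih]

theorem isPrincipal_nadd_omega0 : IsPrincipal (· ♯ ·) ω := by
  intro a b ha hb
  obtain ⟨n, rfl⟩ := lt_omega0.1 hb
  simpa only [nadd_natCast] using isPrincipal_add_omega0 ha hb

theorem nadd_add_le (a b c : Ordinal) : (a ♯ b) + c ≤ a ♯ (b + c) := by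
  induction c using WellFoundedLT.induction with
  | _ c ih =>
  rcases eq_or_ne c 0 with rfl | hc
  · simp
  refine le_of_forall_lt fun x hx => ?_
  obtain ⟨d, hd, hx⟩ := (lt_add_iff hc).1 hx
  exact hx.trans_lt ((ih d hd).trans_lt (nadd_lt_nadd_left' a (add_lt_add_right hd b)))

section DivMod

variable {v : Ordinal}

theorem nadd_lt_mul_nadd_div_add_nadd_mod_of_lt (hv : IsPrincipal (· ♯ ·) v) {a' a : Ordinal}
    (b : Ordinal) (ha : a' < a) (ih : a' ♯ b ≤ v * (a' / v ♯ b / v) + (a' % v ♯ b % v)) :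
    a' ♯ b < v * (a / v ♯ b / v) + (a % v ♯ b % v) := by
  rcases eq_or_ne v 0 with rfl | hv0
  · simpa using nadd_lt_nadd_right' b ha
  rcases (div_le_left ha.le v).lt_or_eq with hdiv | hdiv
  · calc a' ♯ b ≤ v * (a' / v ♯ b / v) + (a' % v ♯ b % v) := ih
      _ < v * (a' / v ♯ b / v) + v := add_lt_add_right (hv (mod_lt a' hv0) (mod_lt b hv0)) _
      _ = v * Order.succ (a' / v ♯ b / v) := (mul_succ _ _).symm
      _ ≤ v * (a / v ♯ b / v) :=
        mul_le_mul_right (Order.succ_le_of_lt (nadd_lt_nadd_right' _ hdiv)) _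
      _ ≤ _ := le_self_add
  · have hmod : a' % v < a % v := by
      rw [← div_add_mod a' v, ← div_add_mod a v, hdiv] at ha
      exact lt_of_add_lt_add_left ha
    rw [← hdiv]
    exact ih.trans_lt (add_lt_add_right (nadd_lt_nadd_right' _ hmod) _)

theorem nadd_le_mul_nadd_div_add_nadd_mod (hv : IsPrincipal (· ♯ ·) v) (a b : Ordinal) :
    a ♯ b ≤ v * (a / v ♯ b / v) + (a % v ♯ b % v) := by
  induction a using WellFoundedLT.induction generalizing b with
  | _ a iha =>
  induction b using WellFoundedLT.induction with
  | _ b ihb =>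
  refine nadd_le_of' (fun a' h => nadd_lt_mul_nadd_div_add_nadd_mod_of_lt hv b h (iha a' h b))
    (fun b' h => ?_)
  have := nadd_lt_mul_nadd_div_add_nadd_mod_of_lt hv a h (by simpa only [nadd_comm'] using ihb b' h)
  simpa only [nadd_comm'] using this

end DivMod

theorem isPrincipal_nadd_omega0_opow (γ : Ordinal) : IsPrincipal (· ♯ ·) (ω ^ γ) := by
  induction γ using limitRecOn with
  | zero =>
    intro a b ha hb
    rw [opow_zero, Order.lt_one_iff] at ha hb
    simp only [ha, hb, nadd_zero', opow_zero, zero_lt_one]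
  | add_one δ IH =>
    intro a b ha hb
    have hv0 : (ω : Ordinal) ^ δ ≠ 0 := (opow_pos δ omega0_pos).ne'
    rw [← Order.succ_eq_add_one, opow_succ] at ha hb ⊢
    have hquot : a / ω ^ δ ♯ b / ω ^ δ < ω :=
      isPrincipal_nadd_omega0 ((lt_mul_iff_div_lt hv0).1 ha) ((lt_mul_iff_div_lt hv0).1 hb)
    calc a ♯ b ≤ ω ^ δ * (a / ω ^ δ ♯ b / ω ^ δ) + (a % ω ^ δ ♯ b % ω ^ δ) :=
          nadd_le_mul_nadd_div_add_nadd_mod IH a b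
      _ < ω ^ δ * (a / ω ^ δ ♯ b / ω ^ δ) + ω ^ δ :=
          add_lt_add_right (IH (mod_lt a hv0) (mod_lt b hv0)) _
      _ = ω ^ δ * Order.succ (a / ω ^ δ ♯ b / ω ^ δ) := (mul_succ _ _).symm
      _ < ω ^ δ * ω :=
          mul_lt_mul_of_pos_left (isSuccLimit_omega0.succ_lt hquot) (opow_pos δ omega0_pos)
  | limit γ hγ IH =>
    intro a b ha hb
    obtain ⟨γa, hγa, ha⟩ := (lt_opow_of_isSuccLimit omega0_ne_zero hγ).1 ha
    obtain ⟨γb, hγb, hb⟩ := (lt_opow_of_isSuccLimit omega0_ne_zero hγ).1 hb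
    have hγ' : max γa γb < γ := max_lt hγa hγb
    have hmono : Monotone fun δ : Ordinal => ω ^ δ := fun _ _ h => opow_le_opow_right omega0_pos h
    exact (IH _ hγ' (ha.trans_le (hmono (le_max_left _ _)))
      (hb.trans_le (hmono (le_max_right _ _)))).trans_le (hmono hγ'.le)

theorem two_opow_add_omega0 (β : Ordinal) : (2 : Ordinal) ^ (β + ω) = ω ^ (β / ω + 1) := by
  have hβω : β + ω = ω * (β / ω + 1) := by
    conv_lhs => rw [← div_add_mod β ω]
    rw [add_assoc, add_omega0 (mod_lt β omega0_ne_zero), mul_add_one]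
  rw [hβω, opow_mul, opow_omega0 one_lt_two (natCast_lt_omega0 2)]

theorem two_opow_nadd_two_opow_add_omega0_le (β : Ordinal) :
    ((2 : Ordinal) ^ β ♯ 2 ^ β) + ω ≤ 2 ^ (β + ω) := by
  have h2β : (2 : Ordinal) ^ β < ω ^ (β / ω + 1) := by
    rw [← two_opow_add_omega0]
    exact (opow_lt_opow_iff_right one_lt_two).2 (lt_add_of_pos_right β omega0_pos)
  rw [two_opow_add_omega0]
  calc ((2 : Ordinal) ^ β ♯ 2 ^ β) + ω ≤ (2 ^ β ♯ 2 ^ β) + ω ^ (β / ω + 1) :=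
        add_le_add_right (left_le_opow ω (zero_lt_one.trans_le le_add_self)) _
    _ = ω ^ (β / ω + 1) := add_omega0_opow (isPrincipal_nadd_omega0_opow _ h2β h2β)

end Ordinal

theorem measure_decrease_append (l : ℕ) (α : ℕ → Ordinal) (β : Ordinal)
    (hβ : β + ω ≤ α l) :
    (natSum (Finset.range (l + 1)) (fun i => (2 : Ordinal) ^ α i)) ♯ (2 : Ordinal) ^ α l ≥
      ((natSum (Finset.range (l + 1)) (fun i => (2 : Ordinal) ^ α i)) ♯
          (2 : Ordinal) ^ β ♯ (2 : Ordinal) ^ β) + ω := by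
  rw [ge_iff_le, nadd_assoc']
  refine (nadd_add_le _ _ _).trans (nadd_mono_left' _ ?_)
  exact (two_opow_nadd_two_opow_add_omega0_le β).trans (opow_le_opow_right zero_lt_two hβ)
end
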